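/- arXiv:1707.07992 — 4 statements merged into one kernel-verified Lean document; each statement's English description precedes it below -/
import Mathlib

section
/- Let G ≤ Aut(C) and, for g ∈ G, let φ(g) be the linear extension to A_C(Λ) of t_i ↦ t_{i g⁻¹} and e^α ↦ e^{α g⁻¹}. Then φ : G → Aut(A_C(Λ)) is a well-defined group homomorphism into the algebra automorphism group of A_C(Λ) if and only if the structure parameters are G-regular. Moreover, when defined, φ is injective (the representation is faithful). -/
/-! `φ(g)` permutes the basis `{tᵢ} ∪ {e^α}`, so it is multiplicative iff it is multiplicative
on pairs of basis vectors. On each such pair, both sides are the same combination of basis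
vectors, with the structure parameter `a`, `b` or `c` on one side and its `g`-translate on the
other; comparing coefficients turns this into exactly the regularity identities. Faithfulness is
read off the `tᵢ`. -/

abbrev Word (n : ℕ) := Fin n → ZMod 2

def wsupp {n : ℕ} (α : Word n) : Finset (Fin n) :=
  Finset.univ.filter fun i => α i = 1

def dotW {n : ℕ} (u v : Word n) : ZMod 2 := ∑ i, u i * v i

def IsStar {n : ℕ} (C : Submodule (ZMod 2) (Word n)) (α : Word n) : Prop :=
  α ∈ C ∧ α ≠ 0 ∧ α ≠ 1

structure CodeAlgebra (F : Type*) [Field F] {n : ℕ} (C : Submodule (ZMod 2) (Word n))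
    (a : Fin n → Word n → F) (b : Word n → Word n → F) (c : Fin n → Word n → F)
    (A : Type*) [AddCommGroup A] [Module F A] where
  mul : A →ₗ[F] A →ₗ[F] A
  t : Fin n → A
  e : Word n → A
  bas : Module.Basis (Fin n ⊕ {α : Word n // IsStar C α}) F A
  bas_t : ∀ i, bas (Sum.inl i) = t i
  bas_e : ∀ α, bas (Sum.inr α) = e α.1
  mul_comm : ∀ x y : A, mul x y = mul y x
  t_mul_t : ∀ i j, mul (t i) (t j) = if i = j then t i else 0
  t_mul_e : ∀ (i : Fin n) (α : Word n), IsStar C α →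
    mul (t i) (e α) = if α i = 1 then a i α • e α else 0
  e_mul_e : ∀ (α β : Word n), IsStar C α → IsStar C β → α ≠ β → α + β ≠ 1 →
    mul (e α) (e β) = b α β • e (α + β)
  e_mul_self : ∀ (α : Word n), IsStar C α →
    mul (e α) (e α) = ∑ i ∈ wsupp α, c i α • t i
  e_mul_compl : ∀ (α β : Word n), IsStar C α → IsStar C β → α + β = 1 →
    mul (e α) (e β) = 0

def Nondeg {F : Type*} [Field F] {n : ℕ} (C : Submodule (ZMod 2) (Word n))
    (a : Fin n → Word n → F) (b : Word n → Word n → F) (c : Fin n → Word n → F) : Prop :=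
  (∀ i : Fin n, ∃ α ∈ C, α i = 1) ∧ (∃ α, IsStar C α) ∧
  (∀ i α, IsStar C α → α i = 1 → a i α ≠ 0) ∧
  (∀ α β, IsStar C α → IsStar C β → α ≠ β → α + β ≠ 1 → b α β ≠ 0) ∧
  (∀ i α, IsStar C α → α i = 1 → c i α ≠ 0)

def wperm {n : ℕ} (g : Equiv.Perm (Fin n)) (α : Word n) : Word n :=
  fun j => α (g.symm j)


section Wperm

variable {n : ℕ}

lemma wperm_injective (g : Equiv.Perm (Fin n)) : Function.Injective (wperm g) :=
  fun α β h => funext fun i => by simpa [wperm] using congrFun h (g i)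

@[simp]
lemma wperm_apply_self (g : Equiv.Perm (Fin n)) (α : Word n) (i : Fin n) :
    wperm g α (g i) = α i := by
  simp [wperm]

lemma wsupp_wperm (g : Equiv.Perm (Fin n)) (α : Word n) :
    wsupp (wperm g α) = (wsupp α).map g.toEmbedding := by
  ext j
  obtain ⟨i, rfl⟩ := g.surjective j
  simp [wsupp]

variable {C : Submodule (ZMod 2) (Word n)} {α β : Word n}

lemma IsStar.wperm (hα : IsStar C α) {g : Equiv.Perm (Fin n)}
    (hg : ∀ γ ∈ C, wperm g γ ∈ C) : IsStar C (wperm g α) :=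
  ⟨hg α hα.1, fun h => hα.2.1 (wperm_injective g h), fun h => hα.2.2 (wperm_injective g h)⟩

lemma IsStar.add (hα : IsStar C α) (hβ : IsStar C β) (hne : α ≠ β) (hone : α + β ≠ 1) :
    IsStar C (α + β) :=
  ⟨C.add_mem hα.1 hβ.1, fun h => hne (funext fun i => CharTwo.add_eq_zero.mp (congrFun h i)),
    hone⟩

end Wperm

/-- The parameters are `G`-regular iff this holds for every `g ∈ G`. -/
def IsRegularUnder {F : Type*} {n : ℕ} (C : Submodule (ZMod 2) (Word n))
    (a : Fin n → Word n → F) (b : Word n → Word n → F) (c : Fin n → Word n → F)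
    (g : Equiv.Perm (Fin n)) : Prop :=
  (∀ i α, IsStar C α → α i = 1 → a i α = a (g i) (wperm g α)) ∧
  (∀ α β, IsStar C α → IsStar C β → α ≠ β → α + β ≠ 1 →
    b α β = b (wperm g α) (wperm g β)) ∧
  (∀ i α, IsStar C α → α i = 1 → c i α = c (g i) (wperm g α))

namespace CodeAlgebra

variable {F : Type*} [Field F] {n : ℕ} {C : Submodule (ZMod 2) (Word n)}
  {a : Fin n → Word n → F} {b : Word n → Word n → F} {c : Fin n → Word n → F}
  {A : Type*} [AddCommGroup A] [Module F A] (CA : CodeAlgebra F C a b c A)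

noncomputable def permMap (g : Equiv.Perm (Fin n)) : A →ₗ[F] A :=
  CA.bas.constr ℕ (Sum.elim (fun i => CA.t (g i)) (fun α => CA.e (wperm g α.1)))

lemma permMap_t (g : Equiv.Perm (Fin n)) (i : Fin n) : CA.permMap g (CA.t i) = CA.t (g i) := by
  rw [permMap, ← CA.bas_t, Module.Basis.constr_basis, Sum.elim_inl]

lemma permMap_e (g : Equiv.Perm (Fin n)) {α : Word n} (hα : IsStar C α) :
    CA.permMap g (CA.e α) = CA.e (wperm g α) := by
  rw [permMap, ← CA.bas_e ⟨α, hα⟩, Module.Basis.constr_basis, Sum.elim_inr]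

lemma e_ne_zero {α : Word n} (hα : IsStar C α) : CA.e α ≠ 0 :=
  CA.bas_e ⟨α, hα⟩ ▸ CA.bas.ne_zero _

lemma linearIndependent_t : LinearIndependent F CA.t := by
  simpa only [Function.comp_def, CA.bas_t] using CA.bas.linearIndependent.comp _ Sum.inl_injective

lemma permMap_mul {g h : Equiv.Perm (Fin n)} (hh : ∀ α ∈ C, wperm h α ∈ C) :
    CA.permMap (g * h) = (CA.permMap g).comp (CA.permMap h) := by
  refine CA.bas.ext fun k => ?_
  rcases k with i | ⟨α, hα⟩
  · simp only [CA.bas_t, LinearMap.comp_apply, permMap_t, Equiv.Perm.mul_apply]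
  · rw [CA.bas_e, LinearMap.comp_apply, CA.permMap_e _ hα, CA.permMap_e _ hα,
      CA.permMap_e _ (hα.wperm hh)]
    rfl

lemma permMap_injective : Function.Injective CA.permMap := fun g h hgh =>
  Equiv.ext fun i => by
    have hti := LinearMap.congr_fun hgh (CA.t i)
    rw [permMap_t, permMap_t, ← CA.bas_t, ← CA.bas_t] at hti
    exact Sum.inl_injective (CA.bas.injective hti)

variable {g : Equiv.Perm (Fin n)} (hg : ∀ α ∈ C, wperm g α ∈ C)
include hg

lemma permMap_t_mul_e_iff {i : Fin n} {α : Word n} (hα : IsStar C α) (hi : α i = 1) :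
    CA.permMap g (CA.mul (CA.t i) (CA.e α))
      = CA.mul (CA.permMap g (CA.t i)) (CA.permMap g (CA.e α))
      ↔ a i α = a (g i) (wperm g α) := by
  rw [CA.t_mul_e i α hα, if_pos hi, map_smul, permMap_t, CA.permMap_e g hα,
    CA.t_mul_e _ _ (hα.wperm hg), wperm_apply_self, if_pos hi]
  exact (smul_left_injective F (CA.e_ne_zero (hα.wperm hg))).eq_iff

lemma permMap_e_mul_e_iff {α β : Word n} (hα : IsStar C α) (hβ : IsStar C β) (hne : α ≠ β)
    (hone : α + β ≠ 1) :
    CA.permMap g (CA.mul (CA.e α) (CA.e β))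
      = CA.mul (CA.permMap g (CA.e α)) (CA.permMap g (CA.e β))
      ↔ b α β = b (wperm g α) (wperm g β) := by
  have hne' : wperm g α ≠ wperm g β := (wperm_injective g).ne hne
  have hone' : wperm g α + wperm g β ≠ 1 := (wperm_injective g).ne hone
  rw [CA.e_mul_e α β hα hβ hne hone, map_smul, CA.permMap_e g (hα.add hβ hne hone),
    CA.permMap_e g hα, CA.permMap_e g hβ, CA.e_mul_e _ _ (hα.wperm hg) (hβ.wperm hg) hne' hone']
  exact (smul_left_injective F (CA.e_ne_zero ((hα.add hβ hne hone).wperm hg))).eq_iff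

lemma permMap_e_mul_self_iff {α : Word n} (hα : IsStar C α) :
    CA.permMap g (CA.mul (CA.e α) (CA.e α))
      = CA.mul (CA.permMap g (CA.e α)) (CA.permMap g (CA.e α))
      ↔ ∀ i ∈ wsupp α, c i α = c (g i) (wperm g α) := by
  rw [CA.e_mul_self α hα, map_sum, CA.permMap_e g hα, CA.e_mul_self _ (hα.wperm hg),
    wsupp_wperm, Finset.sum_map]
  simp only [map_smul, permMap_t, Equiv.coe_toEmbedding]
  have hti : LinearIndependent F (CA.t ∘ g) := CA.linearIndependent_t.comp g g.injective
  exact ⟨linearIndependent_iff'ₛ.mp hti _ _ _, fun h => Finset.sum_congr rfl fun i hi => by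
    rw [h i hi]⟩

lemma isRegularUnder_of_permMap_mul
    (hmul : ∀ x y, CA.permMap g (CA.mul x y) = CA.mul (CA.permMap g x) (CA.permMap g y)) :
    IsRegularUnder C a b c g :=
  ⟨fun _ _ hα hi => (CA.permMap_t_mul_e_iff hg hα hi).mp (hmul _ _),
    fun _ _ hα hβ hne hone => (CA.permMap_e_mul_e_iff hg hα hβ hne hone).mp (hmul _ _),
    fun i _ hα hi => (CA.permMap_e_mul_self_iff hg hα).mp (hmul _ _) i (by simpa [wsupp])⟩

lemma permMap_mul_basis (hreg : IsRegularUnder C a b c g) (k l) :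
    CA.permMap g (CA.mul (CA.bas k) (CA.bas l))
      = CA.mul (CA.permMap g (CA.bas k)) (CA.permMap g (CA.bas l)) := by
  obtain ⟨ha, hb, hc⟩ := hreg
  have t_mul_e : ∀ i β, IsStar C β → CA.permMap g (CA.mul (CA.t i) (CA.e β))
      = CA.mul (CA.permMap g (CA.t i)) (CA.permMap g (CA.e β)) := fun i β hβ => by
    by_cases hi : β i = 1
    · exact (CA.permMap_t_mul_e_iff hg hβ hi).mpr (ha i β hβ hi)
    · rw [CA.t_mul_e i β hβ, if_neg hi, map_zero, permMap_t, CA.permMap_e g hβ,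
        CA.t_mul_e _ _ (hβ.wperm hg), wperm_apply_self, if_neg hi]
  rcases k with i | ⟨α, hα⟩ <;> rcases l with j | ⟨β, hβ⟩
  · simp only [CA.bas_t, CA.t_mul_t, permMap_t, g.injective.eq_iff]
    split_ifs with hij
    · rw [hij, permMap_t]
    · exact map_zero _
  · simpa only [CA.bas_t, CA.bas_e] using t_mul_e i β hβ
  · rw [CA.bas_e, CA.bas_t, CA.mul_comm, CA.mul_comm (CA.permMap g _)]
    exact t_mul_e j α hα
  simp only [CA.bas_e]
  by_cases hαβ : α = β
  · subst hαβ
    exact (CA.permMap_e_mul_self_iff hg hα).mpr fun i hi => hc i α hα (by simpa [wsupp] using hi)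
  by_cases hone : α + β = 1
  · rw [CA.e_mul_compl α β hα hβ hone, map_zero, CA.permMap_e g hα, CA.permMap_e g hβ,
      CA.e_mul_compl _ _ (hα.wperm hg) (hβ.wperm hg)]
    exact congrArg (wperm g) hone
  exact (CA.permMap_e_mul_e_iff hg hα hβ hαβ hone).mpr (hb α β hα hβ hαβ hone)

theorem permMap_mul_iff_isRegularUnder :
    (∀ x y, CA.permMap g (CA.mul x y) = CA.mul (CA.permMap g x) (CA.permMap g y))
      ↔ IsRegularUnder C a b c g := by
  refine ⟨CA.isRegularUnder_of_permMap_mul hg, fun hreg x y => ?_⟩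
  have hbilin : CA.mul.compr₂ (CA.permMap g) = CA.mul.compl₁₂ (CA.permMap g) (CA.permMap g) :=
    LinearMap.ext_basis CA.bas CA.bas fun k l => CA.permMap_mul_basis hg hreg k l
  exact LinearMap.congr_fun₂ hbilin x y

end CodeAlgebra

/-- Lemma 3.6: the map φ sending g to the linear extension of t_i ↦ t_{gi}, e^α ↦ e^{gα}
is a well-defined group homomorphism into the algebra automorphisms of the code algebra
if and only if the structure parameters are G-regular; moreover it is then faithful. -/
theorem code_aut_action_iff_regular {F : Type*} [Field F] {n : ℕ}
    {C : Submodule (ZMod 2) (Word n)}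
    {a : Fin n → Word n → F} {b : Word n → Word n → F} {c : Fin n → Word n → F}
    {A : Type*} [AddCommGroup A] [Module F A]
    (CA : CodeAlgebra F C a b c A)
    (G : Subgroup (Equiv.Perm (Fin n)))
    (hG : ∀ g ∈ G, ∀ α ∈ C, wperm g α ∈ C)
    (φ : Equiv.Perm (Fin n) → (A →ₗ[F] A))
    (hφ : ∀ g, φ g = CA.bas.constr ℕ
      (Sum.elim (fun i => CA.t (g i)) (fun α => CA.e (wperm g α.1)))) :
    -- φ is always compatible with the group structure on the basis
    (∀ g ∈ G, ∀ h ∈ G, φ (g * h) = (φ g).comp (φ h)) ∧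
    -- φ(g) is an algebra map for all g ∈ G iff the parameters are G-regular
    ((∀ g ∈ G, ∀ x y : A, φ g (CA.mul x y) = CA.mul (φ g x) (φ g y)) ↔
      (∀ g ∈ G,
        (∀ i α, IsStar C α → α i = 1 → a i α = a (g i) (wperm g α)) ∧
        (∀ α β, IsStar C α → IsStar C β → α ≠ β → α + β ≠ 1 →
          b α β = b (wperm g α) (wperm g β)) ∧
        (∀ i α, IsStar C α → α i = 1 → c i α = c (g i) (wperm g α)))) ∧
    -- faithfulness
    (∀ g ∈ G, ∀ h ∈ G, φ g = φ h → g = h) := by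
  obtain rfl : φ = CA.permMap := funext hφ
  exact ⟨fun g _ h hh => CA.permMap_mul (hG h hh),
    forall₂_congr fun g hg => CA.permMap_mul_iff_isRegularUnder (hG g hg),
    fun g _ h _ hgh => CA.permMap_injective hgh⟩
end

section
/- Let A = A_C(Λ) be a non-degenerate code algebra and fix i ∈ {1,…,n}. If a_{i,α} ≠ 1 for all α ∈ C* with α_i = 1, then the adjoint map ad_{t_i} : x ↦ t_i·x is diagonalisable with eigenvalue set {1, 0} ∪ {a_{i,α} : α ∈ C*, α_i = 1}, and A = A₁ ⊕ A₀ ⊕ (⊕ A_{a_{i,α}}), where A₁ = span{t_i}, A₀ = span{t_j : j ≠ i} ∪ {e^α : α ∈ C*, α_i = 0}, and for each eigenvalue a, A_a = span{e^β : β ∈ C*, β_i = 1, a_{i,β} = a}. Moreover dim A₀ = |C|/2 + n − 2. -/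
/-! The basis vectors are eigenvectors of `ad_{t_i}`: `t_j` with eigenvalue `δ_{ij}` and `e^α`
with eigenvalue `a_{i,α}` or `0` according as `α_i = 1` or not (`toralWeight`). Hence every
eigenspace is spanned by the basis vectors of that weight. As `a_{i,α} ≠ 0`, the weight-0 ones
are the `t_j` with `j ≠ i` and the `e^α` with `α_i = 0`; since some codeword has `α_i = 1`, the
codewords with `α_i = 0` form the kernel of a surjective map `C → 𝔽₂`, i.e. half of `C`. -/
open Module Submodule

namespace Module.Basis

variable {ι F A : Type*} [Field F] [AddCommGroup A] [Module F A] (b : Basis ι F A)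
  {d : ι → F} {f : End F A}

theorem repr_apply_of_diagonal (hd : ∀ k, f (b k) = d k • b k) (x : A) (k : ι) :
    b.repr (f x) k = d k * b.repr x k := by
  have h : Finsupp.lapply k ∘ₗ b.repr.toLinearMap ∘ₗ f =
      d k • (Finsupp.lapply k ∘ₗ b.repr.toLinearMap) := b.ext fun j => by
    obtain rfl | hjk := eq_or_ne j k <;> simp [*]
  exact LinearMap.congr_fun h x

theorem eigenspace_eq_span_of_diagonal (hd : ∀ k, f (b k) = d k • b k) (μ : F) :
    f.eigenspace μ = span F (b '' {k | d k = μ}) := by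
  refine le_antisymm (fun x hx => ?_) (span_le.mpr ?_)
  · rw [b.mem_span_image]
    intro k hk
    have hfx := b.repr_apply_of_diagonal hd x k
    rw [End.mem_eigenspace_iff.mp hx, map_smul, Finsupp.smul_apply, smul_eq_mul] at hfx
    exact mul_right_cancel₀ (Finsupp.mem_support_iff.mp hk) hfx.symm
  · rintro _ ⟨k, rfl, rfl⟩
    exact End.mem_eigenspace_iff.mpr (hd k)

theorem iSup_eigenspace_eq_top_of_diagonal (hd : ∀ k, f (b k) = d k • b k) :
    ⨆ μ, f.eigenspace μ = ⊤ := by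
  rw [eq_top_iff, ← b.span_eq, span_le]
  rintro _ ⟨k, rfl⟩
  exact le_iSup f.eigenspace (d k) (End.mem_eigenspace_iff.mpr (hd k))

theorem hasEigenvalue_iff_of_diagonal (hd : ∀ k, f (b k) = d k • b k) (μ : F) :
    f.HasEigenvalue μ ↔ ∃ k, d k = μ := by
  rw [End.hasEigenvalue_iff, b.eigenspace_eq_span_of_diagonal hd, Ne, span_eq_bot]
  simp [b.ne_zero]

theorem finrank_span_image (s : Set ι) : finrank F (span F (b '' s)) = s.ncard := by
  rw [finrank, ← Cardinal.toNat_toENat,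
    toENat_rank_span_set (b.linearIndependent.linearIndepOn s), Set.ncard_def]

end Module.Basis

theorem Submodule.card_eq_card_mul_ncard_apply_eq_zero {ι K : Type*} [Field K]
    {C : Submodule K (ι → K)} {i : ι} {α₀ : ι → K} (hα₀ : α₀ ∈ C) (hi : α₀ i ≠ 0) :
    Nat.card C = Nat.card K * {α | α ∈ C ∧ α i = 0}.ncard := by
  let φ : C →+ K := ((LinearMap.proj i).comp C.subtype).toAddMonoidHom
  have hφ : Function.Surjective φ := fun y =>
    ⟨⟨(y / α₀ i) • α₀, C.smul_mem _ hα₀⟩, by simp [φ, hi]⟩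
  rw [φ.ker.card_eq_card_quotient_mul_card_addSubgroup,
    Nat.card_congr (QuotientAddGroup.quotientKerEquivOfSurjective φ hφ).toEquiv,
    ← Nat.card_coe_set_eq]
  exact congrArg _ (Nat.card_congr (Equiv.subtypeSubtypeEquivSubtypeInter (· ∈ C) (· i = 0)))

theorem ZMod.ne_one_iff_eq_zero (x : ZMod 2) : x ≠ 1 ↔ x = 0 := by
  revert x; decide

def toralWeight {F : Type*} [Field F] {n : ℕ} (C : Submodule (ZMod 2) (Word n))
    (a : Fin n → Word n → F) (i : Fin n) : Fin n ⊕ {α // IsStar C α} → F :=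
  Sum.elim (fun j => if j = i then 1 else 0) fun α => if α.1 i = 1 then a i α.1 else 0

section toralWeight

variable {F : Type*} [Field F] {n : ℕ} {C : Submodule (ZMod 2) (Word n)}
  {a : Fin n → Word n → F} {i : Fin n}

theorem image_val_setOf_isStar (p : Word n → Prop) :
    Subtype.val '' {α : {α // IsStar C α} | p α.1} = {α | IsStar C α ∧ p α} := by
  ext α
  simp [and_comm]

theorem setOf_isStar_and_apply_eq_zero :
    {α | IsStar C α ∧ α i = 0} = {α | α ∈ C ∧ α i = 0} \ {0} := by
  ext α
  simp only [IsStar, Set.mem_ofPred_eq, Set.mem_sdiff, Set.mem_singleton_iff]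
  refine ⟨fun ⟨⟨hC, h0, _⟩, hi⟩ => ⟨⟨hC, hi⟩, h0⟩, fun ⟨⟨hC, hi⟩, h0⟩ => ⟨⟨hC, h0, ?_⟩, hi⟩⟩
  rintro rfl
  exact one_ne_zero hi

theorem setOf_toralWeight_eq_zero (ha0 : ∀ α, IsStar C α → α i = 1 → a i α ≠ 0) :
    {k | toralWeight C a i k = 0} =
      Sum.inl '' {j | j ≠ i} ∪ Sum.inr '' {α | α.1 i = 0} := by
  ext (j | α)
  · simp [toralWeight]
  · by_cases h : α.1 i = 1 <;> simp [toralWeight, h, ha0 _ α.2, ← ZMod.ne_one_iff_eq_zero]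

theorem setOf_toralWeight_eq_one (ha1 : ∀ α, IsStar C α → α i = 1 → a i α ≠ 1) :
    {k | toralWeight C a i k = 1} = {Sum.inl i} := by
  ext (j | α)
  · simp [toralWeight]
  · by_cases h : α.1 i = 1 <;> simp [toralWeight, h, ha1 _ α.2]

theorem setOf_toralWeight_eq {μ : F} (hμ0 : μ ≠ 0) (hμ1 : μ ≠ 1) :
    {k | toralWeight C a i k = μ} = Sum.inr '' {α | α.1 i = 1 ∧ a i α.1 = μ} := by
  ext (j | α)
  · by_cases h : j = i <;> simp [toralWeight, h, hμ0.symm, hμ1.symm]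
  · by_cases h : α.1 i = 1 <;> simp [toralWeight, h, hμ0.symm]

theorem exists_toralWeight_eq_zero (hstar : ∃ α, IsStar C α) :
    ∃ k, toralWeight C a i k = 0 := by
  obtain ⟨α, hα⟩ := hstar
  by_cases h : α i = 1
  · obtain ⟨j, hj⟩ : ∃ j, α j ≠ 1 := by
      by_contra! h'
      exact hα.2.2 (funext h')
    have hji : j ≠ i := by
      rintro rfl
      exact hj h
    exact ⟨Sum.inl j, by simp [toralWeight, hji]⟩
  · exact ⟨Sum.inr ⟨α, hα⟩, by simp [toralWeight, h]⟩

theorem exists_toralWeight_eq_iff (hstar : ∃ α, IsStar C α) (μ : F) :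
    (∃ k, toralWeight C a i k = μ) ↔
      μ = 1 ∨ μ = 0 ∨ ∃ α, IsStar C α ∧ α i = 1 ∧ a i α = μ := by
  constructor
  · rintro ⟨j | α, rfl⟩
    · by_cases h : j = i <;> simp [toralWeight, h]
    · by_cases h : α.1 i = 1
      · exact Or.inr (Or.inr ⟨α.1, α.2, h, by simp [toralWeight, h]⟩)
      · simp [toralWeight, h]
  · rintro (rfl | rfl | ⟨α, hα, h1, rfl⟩)
    · exact ⟨Sum.inl i, by simp [toralWeight]⟩
    · exact exists_toralWeight_eq_zero hstar
    · exact ⟨Sum.inr ⟨α, hα⟩, by simp [toralWeight, h1]⟩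

theorem ncard_setOf_toralWeight_eq_zero (hsupp : ∃ α ∈ C, α i = 1)
    (ha0 : ∀ α, IsStar C α → α i = 1 → a i α ≠ 0) :
    {k | toralWeight C a i k = 0}.ncard = Nat.card C / 2 + n - 2 := by
  set T := {α | α ∈ C ∧ α i = 0}
  have hC : Nat.card C = 2 * T.ncard := by
    obtain ⟨α₀, hα₀, h1⟩ := hsupp
    rw [C.card_eq_card_mul_ncard_apply_eq_zero (i := i) hα₀ (by simp [h1]), Nat.card_zmod]
  have hT : 0 < T.ncard := (Set.ncard_pos T.toFinite).mpr ⟨0, C.zero_mem, rfl⟩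
  rw [setOf_toralWeight_eq_zero ha0, Set.ncard_union_eq (by simp [Set.disjoint_left]),
    Set.ncard_image_of_injective _ Sum.inl_injective,
    Set.ncard_image_of_injective _ Sum.inr_injective,
    ← Set.ncard_image_of_injective _ Subtype.val_injective,
    image_val_setOf_isStar fun α => α i = 0, setOf_isStar_and_apply_eq_zero,
    Set.ncard_sdiff_singleton_of_mem (show (0 : Word n) ∈ T from ⟨C.zero_mem, rfl⟩),
    show {j | j ≠ i} = {i}ᶜ from rfl, Set.ncard_compl, Set.ncard_singleton, Nat.card_fin, hC]
  have := i.pos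
  omega

end toralWeight

namespace CodeAlgebra

variable {F : Type*} [Field F] {n : ℕ} {C : Submodule (ZMod 2) (Word n)}
  {a : Fin n → Word n → F} {b : Word n → Word n → F} {c : Fin n → Word n → F}
  {A : Type*} [AddCommGroup A] [Module F A] (CA : CodeAlgebra F C a b c A)

theorem t_mul_bas (i : Fin n) (k : Fin n ⊕ {α // IsStar C α}) :
    CA.mul (CA.t i) (CA.bas k) = toralWeight C a i k • CA.bas k := by
  rcases k with j | α
  · rw [CA.bas_t, CA.t_mul_t]
    obtain rfl | h := eq_or_ne j i <;> simp [toralWeight, *, Ne.symm]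
  · rw [CA.bas_e, CA.t_mul_e i α.1 α.2]
    by_cases h : α.1 i = 1 <;> simp [toralWeight, h]

theorem bas_image_inl (s : Set (Fin n)) : CA.bas '' (Sum.inl '' s) = CA.t '' s := by
  simp [Set.image_image, CA.bas_t]

theorem bas_image_inr (p : Word n → Prop) :
    CA.bas '' (Sum.inr '' {α | p α.1}) = CA.e '' {α | IsStar C α ∧ p α} := by
  rw [Set.image_image, ← image_val_setOf_isStar, Set.image_image]
  simp only [CA.bas_e]

end CodeAlgebra

/-- Lemma 3.11: the adjoint of a toral idempotent is diagonalisable, with eigenvalues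
1, 0 and the a_(i,α), and eigenspaces as described; moreover dim A₀ = |C|/2 + n - 2. -/
theorem toral_adjoint_diagonalisable {F : Type*} [Field F] {n : ℕ}
    {C : Submodule (ZMod 2) (Word n)}
    {a : Fin n → Word n → F} {b : Word n → Word n → F} {c : Fin n → Word n → F}
    {A : Type*} [AddCommGroup A] [Module F A]
    (CA : CodeAlgebra F C a b c A)
    (hnd : Nondeg C a b c) (i : Fin n)
    (ha1 : ∀ α, IsStar C α → α i = 1 → a i α ≠ 1)
    (f : Module.End F A) (hf : f = CA.mul (CA.t i)) :
    -- semisimplicity: A is the (direct) sum of the eigenspaces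
    (⨆ μ : F, f.eigenspace μ) = ⊤ ∧
    -- the eigenvalues are exactly 1, 0 and the a_(i,α)
    (∀ μ : F, f.HasEigenvalue μ ↔
      (μ = 1 ∨ μ = 0 ∨ ∃ α, IsStar C α ∧ α i = 1 ∧ a i α = μ)) ∧
    -- the eigenspaces
    f.eigenspace 1 = Submodule.span F {CA.t i} ∧
    f.eigenspace 0 = Submodule.span F
      (CA.t '' {j : Fin n | j ≠ i} ∪ CA.e '' {α : Word n | IsStar C α ∧ α i = 0}) ∧
    (∀ μ : F, μ ≠ 0 → μ ≠ 1 → f.eigenspace μ =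
      Submodule.span F (CA.e '' {β : Word n | IsStar C β ∧ β i = 1 ∧ a i β = μ})) ∧
    -- dimension of the zero eigenspace
    Module.finrank F (f.eigenspace 0) = Nat.card C / 2 + n - 2 := by
  obtain ⟨hsupp, hstar, ha0, -, -⟩ := hnd
  have hdiag : ∀ k, f (CA.bas k) = toralWeight C a i k • CA.bas k := by
    subst hf
    exact CA.t_mul_bas i
  have heigen := CA.bas.eigenspace_eq_span_of_diagonal hdiag
  refine ⟨CA.bas.iSup_eigenspace_eq_top_of_diagonal hdiag,
    fun μ => (CA.bas.hasEigenvalue_iff_of_diagonal hdiag μ).trans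
      (exists_toralWeight_eq_iff hstar μ), ?_, ?_, fun μ hμ0 hμ1 => ?_, ?_⟩
  · rw [heigen, setOf_toralWeight_eq_one ha1, Set.image_singleton, CA.bas_t]
  · rw [heigen, setOf_toralWeight_eq_zero (ha0 i), Set.image_union, CA.bas_image_inl,
      CA.bas_image_inr fun α => α i = 0]
  · rw [heigen, setOf_toralWeight_eq hμ0 hμ1,
      CA.bas_image_inr fun β => β i = 1 ∧ a i β = μ]
  · rw [heigen, CA.bas.finrank_span_image, ncard_setOf_toralWeight_eq_zero (hsupp i) (ha0 i)]
end

section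
/- Let A = A_C(Λ) be a non-degenerate code algebra. Then there exists an element t ∈ A such that t·t_i = t_i for all i ∈ {1,…,n} and t·e^α is a scalar multiple of e^α for all α ∈ C*. Moreover, this element is unique, it equals t = Σ_{i=1}^n t_i, and it is an idempotent. -/
/-! Multiplication by `t_i` is diagonal in the basis `{t_j} ∪ {e^α}`, with eigenvalue `1` on `t_i`
and `a_{i,α} ≠ 0` on every `e^α` with `α_i = 1`. Hence `u · t_i = t_i` for all `i` pins down every
coordinate of `u`, and `Σ t_i` is a solution. -/

theorem Module.Basis.repr_apply_of_apply_eq_smul {ι R M : Type*} [CommSemiring R]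
    [AddCommMonoid M] [Module R M] (b : Module.Basis ι R M) {f : M →ₗ[R] M} {d : ι → R}
    (hf : ∀ x, f (b x) = d x • b x) (u : M) (x : ι) :
    b.repr (f u) x = d x * b.repr u x := by
  classical
  have : (Finsupp.lapply x ∘ₗ b.repr.toLinearMap ∘ₗ f : M →ₗ[R] R) =
      d x • (Finsupp.lapply x ∘ₗ b.repr.toLinearMap) :=
    b.ext fun y => by by_cases h : y = x <;> simp [hf, h]
  exact LinearMap.congr_fun this u

theorem Word.exists_eq_one_of_ne_zero {n : ℕ} {α : Word n} (hα : α ≠ 0) : ∃ i, α i = 1 := by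
  by_contra! h
  exact hα (funext fun i => by_contra fun hi => h i (Fin.eq_one_of_ne_zero _ hi))

namespace CodeAlgebra

variable {F : Type*} [Field F] {n : ℕ} {C : Submodule (ZMod 2) (Word n)}
  {a : Fin n → Word n → F} {b : Word n → Word n → F} {c : Fin n → Word n → F}
  {A : Type*} [AddCommGroup A] [Module F A] (CA : CodeAlgebra F C a b c A)

def tEigenvalue (a : Fin n → Word n → F) (i : Fin n) : Fin n ⊕ {α : Word n // IsStar C α} → F :=
  Sum.elim (fun j => if j = i then 1 else 0) (fun α => if α.1 i = 1 then a i α.1 else 0)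

theorem mul_bas_t (i : Fin n) (x : Fin n ⊕ {α : Word n // IsStar C α}) :
    CA.mul (CA.bas x) (CA.t i) = tEigenvalue a i x • CA.bas x := by
  rcases x with j | α
  · by_cases h : j = i <;> simp [tEigenvalue, CA.bas_t, CA.t_mul_t, h]
  · rw [CA.bas_e, CA.mul_comm, CA.t_mul_e i α.1 α.2]
    by_cases h : α.1 i = 1 <;> simp [tEigenvalue, h]

theorem repr_mul_t (u : A) (i : Fin n) (x : Fin n ⊕ {α : Word n // IsStar C α}) :
    CA.bas.repr (CA.mul u (CA.t i)) x = tEigenvalue a i x * CA.bas.repr u x :=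
  CA.bas.repr_apply_of_apply_eq_smul (f := CA.mul.flip (CA.t i)) (CA.mul_bas_t i) u x

theorem eq_of_forall_mul_t_eq_t (ha : ∀ i α, IsStar C α → α i = 1 → a i α ≠ 0) {u v : A}
    (hu : ∀ i, CA.mul u (CA.t i) = CA.t i) (hv : ∀ i, CA.mul v (CA.t i) = CA.t i) :
    u = v := by
  have hcoord : ∀ i x,
      tEigenvalue a i x * CA.bas.repr u x = tEigenvalue a i x * CA.bas.repr v x :=
    fun i x => by rw [← repr_mul_t, ← repr_mul_t, hu, hv]
  refine CA.bas.ext_elem fun x => ?_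
  rcases x with i | α
  · simpa [tEigenvalue] using hcoord i (Sum.inl i)
  · obtain ⟨i, hi⟩ := Word.exists_eq_one_of_ne_zero α.2.2.1
    simpa [tEigenvalue, hi, ha i α.1 α.2 hi] using hcoord i (Sum.inr α)

theorem sum_t_mul_t (i : Fin n) : CA.mul (∑ j, CA.t j) (CA.t i) = CA.t i := by
  simp [map_sum, LinearMap.sum_apply, CA.t_mul_t]

theorem sum_t_mul_e {α : Word n} (hα : IsStar C α) :
    CA.mul (∑ j, CA.t j) (CA.e α) = (∑ j ∈ wsupp α, a j α) • CA.e α := by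
  simp only [map_sum, LinearMap.sum_apply, CA.t_mul_e _ α hα, wsupp, Finset.sum_filter,
    Finset.sum_smul]
  exact Finset.sum_congr rfl fun j _ => by split_ifs <;> simp

theorem sum_t_mul_self : CA.mul (∑ j, CA.t j) (∑ j, CA.t j) = ∑ j, CA.t j := by
  rw [map_sum]
  exact Finset.sum_congr rfl fun i _ => CA.sum_t_mul_t i

end CodeAlgebra

/-- Lemma 3.15: there is a unique element t with t·t_i = t_i for all i and t·e^α a scalar
multiple of e^α for all α ∈ C*; it is the idempotent t = Σ t_i. -/
theorem sum_of_torals_unique {F : Type*} [Field F] {n : ℕ}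
    {C : Submodule (ZMod 2) (Word n)}
    {a : Fin n → Word n → F} {b : Word n → Word n → F} {c : Fin n → Word n → F}
    {A : Type*} [AddCommGroup A] [Module F A]
    (CA : CodeAlgebra F C a b c A)
    (hnd : Nondeg C a b c) :
    (∀ i : Fin n, CA.mul (∑ j, CA.t j) (CA.t i) = CA.t i) ∧
    (∀ α : Word n, IsStar C α → ∃ k : F, CA.mul (∑ j, CA.t j) (CA.e α) = k • CA.e α) ∧
    CA.mul (∑ j, CA.t j) (∑ j, CA.t j) = (∑ j, CA.t j) ∧
    (∀ u : A, (∀ i : Fin n, CA.mul u (CA.t i) = CA.t i) →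
      (∀ α : Word n, IsStar C α → ∃ k : F, CA.mul u (CA.e α) = k • CA.e α) →
      u = ∑ j, CA.t j) :=
  ⟨CA.sum_t_mul_t, fun _ hα => ⟨_, CA.sum_t_mul_e hα⟩, CA.sum_t_mul_self,
    fun _ hu _ => CA.eq_of_forall_mul_t_eq_t hnd.2.2.1 hu CA.sum_t_mul_t⟩
end

section
/- Every associative bilinear form on a non-degenerate code algebra A = A_C(Λ) is symmetric; that is, if (·,·) : A × A → 𝔽 is bilinear and satisfies (x, y·z) = (x·y, z) for all x, y, z ∈ A, then (x, y) = (y, x) for all x, y ∈ A. -/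
/-!
For a commutative algebra, associativity alone makes `B` symmetric against products:
`B z (u v) = B (z u) v = B (u z) v = B u (z v) = B u (v z) = B (u v) z`. A non-degenerate
code algebra is spanned by products, since `t i = t i * t i` and `e α = (a i α)⁻¹ • (t i * e α)`
for any `i ∈ supp α`, so `B` is symmetric everywhere.
-/

namespace LinearMap

variable {R M : Type*} [CommSemiring R] [AddCommMonoid M] [Module R M]
  (mul : M →ₗ[R] M →ₗ[R] M) (B : M →ₗ[R] M →ₗ[R] R)

theorem apply_mul_comm_of_assoc (hcomm : ∀ x y, mul x y = mul y x)
    (hassoc : ∀ x y z, B x (mul y z) = B (mul x y) z) (u v z : M) :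
    B z (mul u v) = B (mul u v) z :=
  calc B z (mul u v) = B (mul u z) v := by rw [hassoc, hcomm]
    _ = B u (mul v z) := by rw [← hassoc, hcomm]
    _ = B (mul u v) z := hassoc u v z

theorem apply_comm_of_map₂_eq_top (hcomm : ∀ x y, mul x y = mul y x)
    (hassoc : ∀ x y z, B x (mul y z) = B (mul x y) z) (htop : Submodule.map₂ mul ⊤ ⊤ = ⊤)
    (x y : M) : B x y = B y x := by
  have hle : Submodule.map₂ mul ⊤ ⊤ ≤ (B x).eqLocus (B.flip x) :=
    Submodule.map₂_le.mpr fun u _ v _ => apply_mul_comm_of_assoc mul B hcomm hassoc u v x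
  exact (htop ▸ hle) Submodule.mem_top

end LinearMap

namespace CodeAlgebra

variable {F : Type*} [Field F] {n : ℕ} {C : Submodule (ZMod 2) (Word n)}
  {a : Fin n → Word n → F} {b : Word n → Word n → F} {c : Fin n → Word n → F}
  {A : Type*} [AddCommGroup A] [Module F A] (CA : CodeAlgebra F C a b c A)

theorem t_mem_map₂_mul (i : Fin n) : CA.t i ∈ Submodule.map₂ CA.mul ⊤ ⊤ := by
  have hmem := Submodule.apply_mem_map₂ CA.mul (Submodule.mem_top (x := CA.t i))
    (Submodule.mem_top (x := CA.t i))
  rwa [CA.t_mul_t, if_pos rfl] at hmem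

theorem e_mem_map₂_mul (ha : ∀ i α, IsStar C α → α i = 1 → a i α ≠ 0) {α : Word n}
    (hα : IsStar C α) : CA.e α ∈ Submodule.map₂ CA.mul ⊤ ⊤ := by
  obtain ⟨i, hi⟩ := Word.exists_eq_one_of_ne_zero hα.2.1
  have hprod : CA.mul (CA.t i) (CA.e α) = a i α • CA.e α := by
    rw [CA.t_mul_e i α hα, if_pos hi]
  have hmem := Submodule.smul_mem _ (a i α)⁻¹
    (Submodule.apply_mem_map₂ CA.mul (Submodule.mem_top (x := CA.t i))
      (Submodule.mem_top (x := CA.e α)))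
  rwa [hprod, inv_smul_smul₀ (ha i α hα hi)] at hmem

theorem map₂_mul_eq_top (ha : ∀ i α, IsStar C α → α i = 1 → a i α ≠ 0) :
    Submodule.map₂ CA.mul ⊤ ⊤ = ⊤ := by
  refine eq_top_iff.mpr (CA.bas.span_eq.symm.trans_le (Submodule.span_le.mpr ?_))
  rintro _ ⟨i | ⟨α, hα⟩, rfl⟩
  · simpa only [CA.bas_t, SetLike.mem_coe] using CA.t_mem_map₂_mul i
  · simpa only [CA.bas_e, SetLike.mem_coe] using CA.e_mem_map₂_mul ha hα

end CodeAlgebra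

/-- Lemma 3.18: any associative bilinear form on a non-degenerate code algebra is symmetric. -/
theorem assoc_form_symmetric {F : Type*} [Field F] {n : ℕ}
    {C : Submodule (ZMod 2) (Word n)}
    {a : Fin n → Word n → F} {b : Word n → Word n → F} {c : Fin n → Word n → F}
    {A : Type*} [AddCommGroup A] [Module F A]
    (CA : CodeAlgebra F C a b c A)
    (hnd : Nondeg C a b c)
    (B : A →ₗ[F] A →ₗ[F] F)
    (hassoc : ∀ x y z : A, B x (CA.mul y z) = B (CA.mul x y) z) :
    ∀ x y : A, B x y = B y x :=
  LinearMap.apply_comm_of_map₂_eq_top CA.mul B CA.mul_comm hassoc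
    (CA.map₂_mul_eq_top hnd.2.2.1)
end
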